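/- Let G : ℝ^N → ℝ be an admissible G-function with Fenchel conjugate G*, and I ⊂ ℝ a bounded nondegenerate interval. Let v ∈ L¹(I,ℝ^N) and M > 0 be such that ∫_I ⟨u(t), v(t)⟩ dt ≤ M ‖u‖_G for every step function u : I → ℝ^N (a function taking finitely many values, each on a measurable subset of I). Then ∫_I G*(v(t)/M) dt ≤ 1; in particular v ∈ L^{G*}(I,ℝ^N) and ‖v‖_{G*} ≤ M. -/

import Mathlib

open MeasureTheory Filter Set

noncomputable section

abbrev Euc (N : ℕ) := EuclideanSpace ℝ (Fin N)

/-- Admissible G-function: (G1)-(G6). -/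
def IsGFunction {N : ℕ} (G : Euc N → ℝ) : Prop :=
  G 0 = 0 ∧
  ConvexOn ℝ Set.univ G ∧
  (∀ x, G (-x) = G x) ∧
  (∀ C : ℝ, ∃ R : ℝ, ∀ x : Euc N, R ≤ ‖x‖ → C * ‖x‖ ≤ G x) ∧
  (∃ K₁ : ℝ, 2 ≤ K₁ ∧ ∃ M₁ : ℝ, 0 < M₁ ∧ ∀ x : Euc N, M₁ ≤ ‖x‖ → G ((2:ℝ) • x) ≤ K₁ * G x) ∧
  (∃ K₂ : ℝ, 1 ≤ K₂ ∧ ∃ M₂ : ℝ, 0 < M₂ ∧ ∀ x : Euc N, M₂ ≤ ‖x‖ → G x ≤ (1/(2*K₂)) * G (K₂ • x))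

/-- Membership in the anisotropic Orlicz space L^G(I, ℝ^N). -/
def MemLG {N : ℕ} (G : Euc N → ℝ) (I : Set ℝ) (u : ℝ → Euc N) : Prop :=
  AEStronglyMeasurable u (volume.restrict I) ∧ IntegrableOn (fun t => G (u t)) I

/-- Luxemburg norm. -/
def luxNorm {N : ℕ} (G : Euc N → ℝ) (I : Set ℝ) (u : ℝ → Euc N) : ℝ :=
  sInf {α : ℝ | 0 < α ∧ (∫ t in I, G (α⁻¹ • u t)) ≤ 1}

/-- Modular. -/
def modular {N : ℕ} (G : Euc N → ℝ) (I : Set ℝ) (u : ℝ → Euc N) : ℝ :=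
  ∫ t in I, G (u t)

/-- Fenchel conjugate. -/
def fenchelConj {N : ℕ} (G : Euc N → ℝ) (y : Euc N) : ℝ :=
  ⨆ x : Euc N, ((inner ℝ x y : ℝ) - G x)


/-! Testing the hypothesis against a step function `u` and using `‖u‖_G ≤ 1 + ∫ G(u)` gives
`∫ (⟪u, v/M⟫ - G(u)) ≤ 1`. For a dense sequence `(e k)` in `ℝ^N`, the functions
`max (0, max_{k<n} (⟪e k, y⟫ - G (e k)))` increase to `G*(y)`. At each `t` the maximum at
`v(t)/M` is attained at one of finitely many points `e k`, and a measurable choice of these points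
is a step function `u`; so each approximant integrates to at most `1`, and monotone convergence
gives `∫ G*(v/M) ≤ 1`. The `∇₂` condition on `G` yields `G*(2y) ≤ A|y| + B G*(y)`, so `G*(v)` is
integrable as well. -/

open Topology
open scoped RealInnerProductSpace

section Convex

variable {E : Type*} [AddCommGroup E] [Module ℝ E] {f : E → ℝ}

theorem ConvexOn.map_smul_le_of_map_zero (hf : ConvexOn ℝ univ f) (h0 : f 0 = 0) {c : ℝ}
    (hc0 : 0 ≤ c) (hc1 : c ≤ 1) (x : E) : f (c • x) ≤ c * f x := by
  simpa [h0] using hf.2 (mem_univ x) (mem_univ 0) hc0 (sub_nonneg.2 hc1) (add_sub_cancel c 1)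

theorem ConvexOn.nonneg_of_even (hf : ConvexOn ℝ univ f) (h0 : f 0 = 0)
    (heven : ∀ x, f (-x) = f x) (x : E) : 0 ≤ f x := by
  have h := hf.2 (mem_univ x) (mem_univ (-x)) (by norm_num : (0 : ℝ) ≤ 1 / 2)
    (by norm_num : (0 : ℝ) ≤ 1 / 2) (by norm_num)
  rw [smul_neg, add_neg_cancel, h0, heven, smul_eq_mul] at h
  linarith

end Convex

section Conjugate

variable {N : ℕ} {G : Euc N → ℝ}

theorem fenchelConj_le {y : Euc N} {c : ℝ} (h : ∀ x, ⟪x, y⟫ - G x ≤ c) :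
    fenchelConj G y ≤ c :=
  ciSup_le h

namespace IsGFunction

theorem nonneg (hG : IsGFunction G) (x : Euc N) : 0 ≤ G x :=
  hG.2.1.nonneg_of_even hG.1 hG.2.2.1 x

protected theorem continuous (hG : IsGFunction G) : Continuous G :=
  continuousOn_univ.1 (hG.2.1.continuousOn isOpen_univ)

theorem bddAbove_range_inner_sub (hG : IsGFunction G) (y : Euc N) :
    BddAbove (range fun x => ⟪x, y⟫ - G x) := by
  obtain ⟨R, hR⟩ := hG.2.2.2.1 ‖y‖
  refine ⟨max 0 (R * ‖y‖), forall_mem_range.2 fun x => ?_⟩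
  have hCS : ⟪x, y⟫ ≤ ‖x‖ * ‖y‖ := real_inner_le_norm x y
  rcases le_or_gt R ‖x‖ with hx | hx
  · have := hR x hx
    linarith [le_max_left 0 (R * ‖y‖)]
  · have := mul_le_mul_of_nonneg_right hx.le (norm_nonneg y)
    linarith [le_max_right 0 (R * ‖y‖), hG.nonneg x]

theorem inner_sub_le_fenchelConj (hG : IsGFunction G) (x y : Euc N) :
    ⟪x, y⟫ - G x ≤ fenchelConj G y :=
  le_ciSup (hG.bddAbove_range_inner_sub y) x

theorem fenchelConj_nonneg (hG : IsGFunction G) (y : Euc N) : 0 ≤ fenchelConj G y := by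
  simpa [hG.1] using hG.inner_sub_le_fenchelConj 0 y

theorem fenchelConj_zero (hG : IsGFunction G) : fenchelConj G 0 = 0 :=
  le_antisymm (fenchelConj_le fun x => by simpa using hG.nonneg x) (hG.fenchelConj_nonneg 0)

theorem convexOn_fenchelConj (hG : IsGFunction G) : ConvexOn ℝ univ (fenchelConj G) := by
  refine ⟨convex_univ, fun p _ q _ c d hc hd hcd => fenchelConj_le fun x => ?_⟩
  have hsplit : ⟪x, c • p + d • q⟫ - G x
      = c * (⟪x, p⟫ - G x) + d * (⟪x, q⟫ - G x) := by
    rw [inner_add_right, real_inner_smul_right, real_inner_smul_right]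
    linear_combination G x * hcd
  rw [hsplit, smul_eq_mul, smul_eq_mul]
  gcongr <;> exact hG.inner_sub_le_fenchelConj x _

theorem continuous_fenchelConj (hG : IsGFunction G) : Continuous (fenchelConj G) :=
  continuousOn_univ.1 (hG.convexOn_fenchelConj.continuousOn isOpen_univ)

theorem fenchelConj_smul_le (hG : IsGFunction G) {s : ℝ} (hs0 : 0 ≤ s) (hs1 : s ≤ 1)
    (y : Euc N) : fenchelConj G (s • y) ≤ fenchelConj G y :=
  (hG.convexOn_fenchelConj.map_smul_le_of_map_zero hG.fenchelConj_zero hs0 hs1 y).trans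
    (mul_le_of_le_one_left (hG.fenchelConj_nonneg y) hs1)

theorem exists_fenchelConj_two_smul_le (hG : IsGFunction G) :
    ∃ A B : ℝ, ∀ y : Euc N, fenchelConj G ((2 : ℝ) • y) ≤ A * ‖y‖ + B * fenchelConj G y := by
  obtain ⟨K, hK, M, hM, hnabla⟩ := hG.2.2.2.2.2
  have hK0 : 0 < K := one_pos.trans_le hK
  refine ⟨2 * K * M, 2 * K, fun y => fenchelConj_le fun x => ?_⟩
  have hy := hG.fenchelConj_nonneg y
  have hMy : 0 ≤ 2 * K * M * ‖y‖ := by positivity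
  rw [real_inner_smul_right]
  rcases le_or_gt (K * M) ‖x‖ with hx | hx
  · -- `∇₂` at `x / K` trades the factor `2` in front of `y` for the factor `2K` in front of `G*`
    have hxK : M ≤ ‖K⁻¹ • x‖ := by
      rw [norm_smul, Real.norm_of_nonneg (inv_nonneg.2 hK0.le), le_inv_mul_iff₀ hK0]
      exact hx
    have hG' := hnabla _ hxK
    rw [smul_inv_smul₀ hK0.ne'] at hG'
    have hFY := hG.inner_sub_le_fenchelConj (K⁻¹ • x) y
    rw [real_inner_smul_left] at hFY
    have : 2 * ⟪x, y⟫ - G x ≤ 2 * K * fenchelConj G y := by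
      have h2K : (2 * K) * (K⁻¹ * ⟪x, y⟫) = 2 * ⟪x, y⟫ := by field_simp
      have h2K' : (2 * K) * (1 / (2 * K) * G x) = G x := by field_simp
      nlinarith
    linarith
  · have hCS : ⟪x, y⟫ ≤ ‖x‖ * ‖y‖ := real_inner_le_norm x y
    nlinarith [norm_nonneg y, hG.nonneg x]

end IsGFunction

end Conjugate

section Integrability

variable {α : Type*} [MeasurableSpace α] {μ : Measure α} {N : ℕ} {G : Euc N → ℝ}
  {w : α → Euc N}

theorem IsGFunction.integrable_fenchelConj_two_pow_smul (hG : IsGFunction G)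
    (hw : Integrable w μ) (hGw : Integrable (fun t => fenchelConj G (w t)) μ) (k : ℕ) :
    Integrable (fun t => fenchelConj G ((2 : ℝ) ^ k • w t)) μ := by
  obtain ⟨A, B, hAB⟩ := hG.exists_fenchelConj_two_smul_le
  induction k with
  | zero => simpa using hGw
  | succ k ih =>
    refine (((hw.smul ((2 : ℝ) ^ k)).norm.const_mul A).add (ih.const_mul B)).mono'
      (hG.continuous_fenchelConj.comp_aestronglyMeasurable (hw.1.const_smul ((2 : ℝ) ^ (k + 1))))
      (ae_of_all _ fun t => ?_)
    rw [Real.norm_of_nonneg (hG.fenchelConj_nonneg _), pow_succ', mul_smul]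
    exact hAB _

theorem IsGFunction.integrable_fenchelConj_smul (hG : IsGFunction G) (hw : Integrable w μ)
    (hGw : Integrable (fun t => fenchelConj G (w t)) μ) {c : ℝ} (hc : 0 ≤ c) :
    Integrable (fun t => fenchelConj G (c • w t)) μ := by
  obtain ⟨k, hk⟩ := pow_unbounded_of_one_lt c one_lt_two
  have h2k : (0 : ℝ) < 2 ^ k := by positivity
  refine (hG.integrable_fenchelConj_two_pow_smul hw hGw k).mono'
    (hG.continuous_fenchelConj.comp_aestronglyMeasurable (hw.1.const_smul c))
    (ae_of_all _ fun t => ?_)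
  rw [Real.norm_of_nonneg (hG.fenchelConj_nonneg _), ← div_mul_cancel₀ c h2k.ne', mul_smul]
  exact hG.fenchelConj_smul_le (by positivity) ((div_le_one h2k).2 hk.le) _

end Integrability

def conjApprox {N : ℕ} (G : Euc N → ℝ) (e : ℕ → Euc N) : ℕ → Euc N → ℝ
  | 0 => fun _ => 0
  | n + 1 => fun y => max (conjApprox G e n y) (⟪e n, y⟫ - G (e n))

section Approximation

variable {N : ℕ} {G : Euc N → ℝ} {e : ℕ → Euc N}

theorem conjApprox_mono (y : Euc N) : Monotone fun n => conjApprox G e n y :=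
  monotone_nat_of_le_succ fun _ => le_max_left _ _

theorem conjApprox_nonneg (n : ℕ) (y : Euc N) : 0 ≤ conjApprox G e n y :=
  conjApprox_mono y n.zero_le

theorem continuous_conjApprox (n : ℕ) : Continuous (conjApprox G e n) := by
  induction n with
  | zero => exact continuous_const
  | succ n ih => exact ih.max ((continuous_const.inner continuous_id).sub continuous_const)

theorem IsGFunction.conjApprox_le_fenchelConj (hG : IsGFunction G) (n : ℕ) (y : Euc N) :
    conjApprox G e n y ≤ fenchelConj G y := by
  induction n with
  | zero => exact hG.fenchelConj_nonneg y
  | succ n ih => exact max_le ih (hG.inner_sub_le_fenchelConj (e n) y)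

theorem IsGFunction.tendsto_conjApprox (hG : IsGFunction G) (he : DenseRange e) (y : Euc N) :
    Tendsto (fun n => conjApprox G e n y) atTop (𝓝 (fenchelConj G y)) := by
  have hbdd : BddAbove (range fun n => conjApprox G e n y) :=
    ⟨_, forall_mem_range.2 fun n => hG.conjApprox_le_fenchelConj n y⟩
  set L := ⨆ n, conjApprox G e n y
  have hclosed : IsClosed {x | ⟪x, y⟫ - G x ≤ L} :=
    isClosed_le ((continuous_id.inner continuous_const).sub hG.continuous) continuous_const
  have hrange : range e ⊆ {x | ⟪x, y⟫ - G x ≤ L} :=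
    forall_mem_range.2 fun n => (le_max_right _ _).trans (le_ciSup hbdd (n + 1))
  have hL : L = fenchelConj G y :=
    le_antisymm (ciSup_le fun n => hG.conjApprox_le_fenchelConj n y)
      (fenchelConj_le fun x => hclosed.closure_subset_iff.2 hrange (he x))
  exact hL ▸ tendsto_atTop_ciSup (conjApprox_mono y) hbdd

theorem exists_simpleFunc_conjApprox_le {α : Type*} [MeasurableSpace α] (hGm : Measurable G)
    (hG0 : G 0 = 0) (e : ℕ → Euc N) {w : α → Euc N} (hw : Measurable w) (n : ℕ) :
    ∃ u : SimpleFunc α (Euc N), ∀ t, conjApprox G e n (w t) ≤ ⟪u t, w t⟫ - G (u t) := by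
  induction n with
  | zero => exact ⟨SimpleFunc.const α 0, fun t => by simp [conjApprox, hG0]⟩
  | succ n ih =>
    obtain ⟨u, hu⟩ := ih
    have hs : MeasurableSet {t | ⟪e n, w t⟫ - G (e n) ≤ ⟪u t, w t⟫ - G (u t)} :=
      measurableSet_le ((measurable_const.inner hw).sub measurable_const)
        ((u.measurable.inner hw).sub (hGm.comp u.measurable))
    refine ⟨u.piecewise _ hs (SimpleFunc.const α (e n)), fun t => ?_⟩
    rw [SimpleFunc.piecewise_apply]
    split_ifs with ht
    · exact max_le (hu t) ht
    · exact max_le ((hu t).trans (not_le.1 ht).le) le_rfl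

end Approximation

theorem MeasureTheory.integrable_and_integral_le_of_tendsto_of_monotone {α : Type*}
    [MeasurableSpace α] {μ : Measure α} {f : ℕ → α → ℝ} {F : α → ℝ} {C : ℝ}
    (hf : ∀ n, Integrable (f n) μ) (hf0 : 0 ≤ᵐ[μ] f 0)
    (h_mono : ∀ᵐ x ∂μ, Monotone fun n => f n x)
    (h_tendsto : ∀ᵐ x ∂μ, Tendsto (fun n => f n x) atTop (𝓝 (F x)))
    (hC : ∀ n, ∫ x, f n x ∂μ ≤ C) :
    Integrable F μ ∧ ∫ x, F x ∂μ ≤ C := by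
  have hfn0 : ∀ n, 0 ≤ᵐ[μ] f n := fun n => by
    filter_upwards [hf0, h_mono] with x h0 hx using h0.trans (hx n.zero_le)
  have hF0 : 0 ≤ᵐ[μ] F := by
    filter_upwards [hf0, h_mono, h_tendsto] with x h0 hx hxF
    exact ge_of_tendsto' hxF fun n => h0.trans (hx n.zero_le)
  have hlintegral : ∫⁻ x, ENNReal.ofReal (F x) ∂μ ≤ ENNReal.ofReal C := by
    refine le_of_tendsto' (lintegral_tendsto_of_tendsto_of_monotone
      (fun n => (hf n).1.aemeasurable.ennreal_ofReal)
      (h_mono.mono fun x hx _ _ hmn => ENNReal.ofReal_le_ofReal (hx hmn))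
      (h_tendsto.mono fun x hx => (ENNReal.continuous_ofReal.tendsto _).comp hx)) fun n => ?_
    rw [← ofReal_integral_eq_lintegral_ofReal (hf n) (hfn0 n)]
    exact ENNReal.ofReal_le_ofReal (hC n)
  have hF : Integrable F μ :=
    ⟨aestronglyMeasurable_of_tendsto_ae atTop (fun n => (hf n).1) h_tendsto,
      (hasFiniteIntegral_iff_ofReal hF0).2 (hlintegral.trans_lt ENNReal.ofReal_lt_top)⟩
  exact ⟨hF, le_of_tendsto' (integral_tendsto_of_tendsto_of_monotone hf hF h_mono h_tendsto) hC⟩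

theorem MeasureTheory.SimpleFunc.integrable_inner_left {α E : Type*} [MeasurableSpace α]
    {μ : Measure α} [NormedAddCommGroup E] [InnerProductSpace ℝ E] (u : SimpleFunc α E)
    {w : α → E} (hw : Integrable w μ) : Integrable (fun t => ⟪u t, w t⟫) μ := by
  obtain ⟨C, hC⟩ := u.exists_forall_norm_le
  refine (hw.norm.const_mul C).mono' (u.aestronglyMeasurable.inner hw.1) (ae_of_all _ fun t => ?_)
  exact (norm_inner_le_norm _ _).trans (mul_le_mul_of_nonneg_right (hC t) (norm_nonneg _))

section Pairing

variable {α : Type*} [MeasurableSpace α] {μ : Measure α} [IsFiniteMeasure μ] {N : ℕ}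
  {G : Euc N → ℝ} {w : α → Euc N}

theorem IsGFunction.integral_conjApprox_le_one (hG : IsGFunction G) (e : ℕ → Euc N)
    (hwm : Measurable w) (hw : Integrable w μ)
    (hpair : ∀ u : SimpleFunc α (Euc N), ∫ t, ⟪u t, w t⟫ ∂μ ≤ 1 + ∫ t, G (u t) ∂μ) (n : ℕ) :
    Integrable (fun t => conjApprox G e n (w t)) μ ∧ ∫ t, conjApprox G e n (w t) ∂μ ≤ 1 := by
  obtain ⟨u, hu⟩ := exists_simpleFunc_conjApprox_le hG.continuous.measurable hG.1 e hwm n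
  have hGu : Integrable (fun t => G (u t)) μ := (u.map G).integrable_of_isFiniteMeasure
  have hinner := u.integrable_inner_left hw
  have happrox : Integrable (fun t => conjApprox G e n (w t)) μ :=
    (hinner.sub hGu).mono' ((continuous_conjApprox n).comp_aestronglyMeasurable hw.1)
      (ae_of_all _ fun t => (Real.norm_of_nonneg (conjApprox_nonneg n _)).trans_le (hu t))
  refine ⟨happrox, ?_⟩
  calc ∫ t, conjApprox G e n (w t) ∂μ ≤ ∫ t, (⟪u t, w t⟫ - G (u t)) ∂μ :=
        integral_mono happrox (hinner.sub hGu) hu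
    _ = ∫ t, ⟪u t, w t⟫ ∂μ - ∫ t, G (u t) ∂μ := integral_sub hinner hGu
    _ ≤ 1 := by linarith [hpair u]

theorem IsGFunction.integrable_fenchelConj_and_integral_le_one (hG : IsGFunction G)
    (hw : Integrable w μ)
    (hpair : ∀ u : SimpleFunc α (Euc N), ∫ t, ⟪u t, w t⟫ ∂μ ≤ 1 + ∫ t, G (u t) ∂μ) :
    Integrable (fun t => fenchelConj G (w t)) μ ∧ ∫ t, fenchelConj G (w t) ∂μ ≤ 1 := by
  set w' := hw.1.mk w
  have hww' : w =ᵐ[μ] w' := hw.1.ae_eq_mk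
  have hpair' (u : SimpleFunc α (Euc N)) : ∫ t, ⟪u t, w' t⟫ ∂μ ≤ 1 + ∫ t, G (u t) ∂μ :=
    (integral_congr_ae (hww'.mono fun t ht => by simp only [ht])).symm.trans_le (hpair u)
  have he := TopologicalSpace.denseRange_denseSeq (Euc N)
  have happrox := hG.integral_conjApprox_le_one (TopologicalSpace.denseSeq (Euc N))
    hw.1.stronglyMeasurable_mk.measurable (hw.congr hww') hpair'
  obtain ⟨hint, hle⟩ := integrable_and_integral_le_of_tendsto_of_monotone
    (fun n => (happrox n).1) (ae_of_all _ fun t => conjApprox_nonneg 0 (w' t))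
    (ae_of_all _ fun t => conjApprox_mono (w' t))
    (ae_of_all _ fun t => hG.tendsto_conjApprox he (w' t)) (fun n => (happrox n).2)
  have hcomp : (fun t => fenchelConj G (w t)) =ᵐ[μ] fun t => fenchelConj G (w' t) :=
    hww'.fun_comp (fenchelConj G)
  exact ⟨hint.congr hcomp.symm, (integral_congr_ae hcomp).trans_le hle⟩

end Pairing

section Luxemburg

variable {N : ℕ} {G : Euc N → ℝ} {I : Set ℝ} {u : ℝ → Euc N}

theorem luxNorm_le {α : ℝ} (hα : 0 < α) (h : ∫ t in I, G (α⁻¹ • u t) ≤ 1) :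
    luxNorm G I u ≤ α :=
  csInf_le ⟨0, fun _ hx => hx.1.le⟩ ⟨hα, h⟩

theorem IsGFunction.luxNorm_le_one_add_modular (hG : IsGFunction G)
    (hu : IntegrableOn (fun t => G (u t)) I) : luxNorm G I u ≤ 1 + modular G I u := by
  set ρ := modular G I u
  have hρ : 0 ≤ ρ := integral_nonneg fun t => hG.nonneg _
  have hc : (1 + ρ)⁻¹ ≤ 1 := inv_le_one_of_one_le₀ (by linarith)
  refine luxNorm_le (by positivity) ?_
  calc ∫ t in I, G ((1 + ρ)⁻¹ • u t) ≤ ∫ t in I, (1 + ρ)⁻¹ * G (u t) :=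
        integral_mono_of_nonneg (ae_of_all _ fun t => hG.nonneg _) (hu.const_mul _)
          (ae_of_all _ fun t => hG.2.1.map_smul_le_of_map_zero hG.1 (by positivity) hc _)
    _ = (1 + ρ)⁻¹ * ρ := integral_const_mul _ _
    _ ≤ 1 := by rw [inv_mul_le_iff₀ (by positivity)]; linarith

end Luxemburg

theorem dual_representation_bound_general {N : ℕ} (G : Euc N → ℝ)
    (hG : IsGFunction G)
    (I : Set ℝ) (a b : ℝ) (hI2 : I ⊆ Icc a b)
    (v : ℝ → Euc N) (hv : IntegrableOn v I) (M : ℝ) (hM : 0 < M)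
    (hpair : ∀ u : MeasureTheory.SimpleFunc ℝ (Euc N),
      (∫ t in I, (inner ℝ (u t) (v t) : ℝ)) ≤ M * luxNorm G I u) :
    (∫ t in I, fenchelConj G (M⁻¹ • v t)) ≤ 1 ∧
    MemLG (fenchelConj G) I v ∧
    luxNorm (fenchelConj G) I v ≤ M := by
  have : IsFiniteMeasure (volume.restrict I) :=
    isFiniteMeasure_restrict.2 ((measure_mono hI2).trans_lt measure_Icc_lt_top).ne
  have hpair' (u : SimpleFunc ℝ (Euc N)) :
      ∫ t in I, ⟪u t, M⁻¹ • v t⟫ ≤ 1 + ∫ t in I, G (u t) :=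
    calc ∫ t in I, ⟪u t, M⁻¹ • v t⟫ = M⁻¹ * ∫ t in I, ⟪u t, v t⟫ := by
          simp_rw [real_inner_smul_right]; exact integral_const_mul _ _
      _ ≤ M⁻¹ * (M * luxNorm G I u) := by gcongr; exact hpair u
      _ = luxNorm G I u := by field_simp
      _ ≤ 1 + ∫ t in I, G (u t) :=
          hG.luxNorm_le_one_add_modular (u.map G).integrable_of_isFiniteMeasure
  obtain ⟨hint, hle⟩ := hG.integrable_fenchelConj_and_integral_le_one (hv.smul M⁻¹) hpair'
  have hGv := hG.integrable_fenchelConj_smul (hv.smul M⁻¹) hint hM.le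
  simp only [Pi.smul_apply, smul_smul, mul_inv_cancel₀ hM.ne', one_smul] at hGv
  exact ⟨hle, ⟨hv.1, hGv⟩, luxNorm_le hM hle⟩

/-- A function in L¹ whose pairing with every step function is
controlled by M times the Luxemburg norm belongs to L^{G*} with norm at most M. -/
theorem dual_representation_bound {N : ℕ} (hN : 1 ≤ N) (G : Euc N → ℝ)
    (hG : IsGFunction G)
    (I : Set ℝ) (a b : ℝ) (hab : a < b) (hI1 : Ioo a b ⊆ I) (hI2 : I ⊆ Icc a b)
    (v : ℝ → Euc N) (hv : IntegrableOn v I) (M : ℝ) (hM : 0 < M)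
    (hpair : ∀ u : MeasureTheory.SimpleFunc ℝ (Euc N),
      (∫ t in I, (inner ℝ (u t) (v t) : ℝ)) ≤ M * luxNorm G I u) :
    (∫ t in I, fenchelConj G (M⁻¹ • v t)) ≤ 1 ∧
    MemLG (fenchelConj G) I v ∧
    luxNorm (fenchelConj G) I v ≤ M :=
  dual_representation_bound_general G hG I a b hI2 v hv M hM hpair

end
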